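/- With the sub-Markov semigroup setup below, define σ_T²(φ) := p_T²·Var_{η_T}(φ) − p_T²·(log p_T)·(η_T(φ))² + 2∫_{(0,T]} Var_{η_t}(Q^{T−t}φ)·p_t dμ(t) for each bounded measurable φ for which t ↦ γ_t((Q^{T−t}φ)²) is Borel measurable. If (φ_n) is a sequence of such functions and φ is such a function with ‖φ_n − φ‖_∞ → 0, then σ_T²(φ_n) → σ_T²(φ). -/

import Mathlib

open MeasureTheory ProbabilityTheory Set Filter
open scoped ENNReal Topology

/-- Action of a kernel on a real test function: `κf(x) = ∫ f(y) κ(x,dy)`. -/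
noncomputable def kapply {E : Type*} [MeasurableSpace E]
    (κ : ProbabilityTheory.Kernel E E) (f : E → ℝ) (x : E) : ℝ :=
  ∫ y, f y ∂(κ x)

/-- The unnormalized measure `γ_t(ψ) = ∫ Q^t ψ dη₀`. -/
noncomputable def gammaMeas {E : Type*} [MeasurableSpace E]
    (Q : ℝ → ProbabilityTheory.Kernel E E) (η₀ : Measure E) (t : ℝ) (ψ : E → ℝ) : ℝ :=
  ∫ x, kapply (Q t) ψ x ∂η₀

/-- The survival probability `p_t = γ_t(1)`. -/
noncomputable def pFun {E : Type*} [MeasurableSpace E]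
    (Q : ℝ → ProbabilityTheory.Kernel E E) (η₀ : Measure E) (t : ℝ) : ℝ :=
  gammaMeas Q η₀ t fun _ => 1

/-- The normalized measure `η_t(ψ) = γ_t(ψ) / p_t`. -/
noncomputable def etaMeas {E : Type*} [MeasurableSpace E]
    (Q : ℝ → ProbabilityTheory.Kernel E E) (η₀ : Measure E) (t : ℝ) (ψ : E → ℝ) : ℝ :=
  gammaMeas Q η₀ t ψ / pFun Q η₀ t

/-- The variance `Var_{η_t}(ψ) = η_t(ψ²) − (η_t ψ)²`. -/
noncomputable def etaVar {E : Type*} [MeasurableSpace E]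
    (Q : ℝ → ProbabilityTheory.Kernel E E) (η₀ : Measure E) (t : ℝ) (ψ : E → ℝ) : ℝ :=
  etaMeas Q η₀ t (fun x => (ψ x) ^ 2) - (etaMeas Q η₀ t ψ) ^ 2

/-- The asymptotic variance
`σ_T²(φ) = p_T² Var_{η_T}(φ) − p_T² log p_T (η_T φ)² + 2 ∫_{(0,T]} Var_{η_t}(Q^{T−t}φ) p_t dμ`. -/
noncomputable def sigmaSqT {E : Type*} [MeasurableSpace E]
    (Q : ℝ → ProbabilityTheory.Kernel E E) (η₀ : Measure E) (T : ℝ) (μ : Measure ℝ)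
    (φ : E → ℝ) : ℝ :=
  (pFun Q η₀ T) ^ 2 * etaVar Q η₀ T φ
    - (pFun Q η₀ T) ^ 2 * Real.log (pFun Q η₀ T) * (etaMeas Q η₀ T φ) ^ 2
    + 2 * ∫ t in Set.Ioc 0 T, etaVar Q η₀ t (kapply (Q (T - t)) φ) * pFun Q η₀ t ∂μ

/-! By the semigroup property, `γ_t(Q^{T-t}φ) = γ_T(φ)` for `0 ≤ t ≤ T`; in particular `p` is
nonincreasing, so `p_t ≥ p_T > 0` on `[0, T]`, and the integrand of `σ_T²(φ)` equals
`γ_t((Q^{T-t}φ)²) - γ_T(φ)² / p_t`. Hence `σ_T²(φ)` is an explicit expression in `γ_T(φ)`,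
`γ_T(φ²)` and `∫ γ_t((Q^{T-t}φ)²) dμ(t)`. Each of these is continuous under bounded pointwise
convergence of `φ`, by bounded convergence applied in turn to the kernels, to `η₀` and to `μ`. -/

section BoundedConvergence

variable {α : Type*} [MeasurableSpace α]

lemma abs_integral_le_of_measure_univ_le_one {ν : Measure α} (hν : ν univ ≤ 1) {f : α → ℝ}
    {C : ℝ} (hC0 : 0 ≤ C) (hC : ∀ x, |f x| ≤ C) : |∫ x, f x ∂ν| ≤ C := by
  have : IsFiniteMeasure ν := ⟨hν.trans_lt ENNReal.one_lt_top⟩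
  calc |∫ x, f x ∂ν| ≤ C * ν.real univ :=
        norm_integral_le_of_norm_le_const (f := f) (ae_of_all _ hC)
    _ ≤ C * 1 := by gcongr; exact ENNReal.toReal_le_of_le_ofReal zero_le_one (by simpa using hν)
    _ = C := mul_one C

lemma tendsto_integral_of_abs_le {ν : Measure α} [IsFiniteMeasure ν] {ι : Type*} {l : Filter ι}
    [l.IsCountablyGenerated] {F : ι → α → ℝ} {f : α → ℝ} {C : ℝ}
    (hF : ∀ n, AEStronglyMeasurable (F n) ν) (hC : ∀ᶠ n in l, ∀ᵐ x ∂ν, |F n x| ≤ C)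
    (hlim : ∀ᵐ x ∂ν, Tendsto (F · x) l (𝓝 (f x))) :
    Tendsto (fun n => ∫ x, F n x ∂ν) l (𝓝 (∫ x, f x ∂ν)) :=
  tendsto_integral_filter_of_dominated_convergence (fun _ => C) (.of_forall hF) hC
    (integrable_const C) hlim

end BoundedConvergence

lemma aestronglyMeasurable_of_measurable_restrict {α : Type*} [MeasurableSpace α]
    {μ : Measure α} {s t : Set α} (hst : s ⊆ t) (ht : MeasurableSet t) {f : α → ℝ}
    (hf : Measurable (t.domRestrict f)) : AEStronglyMeasurable f (μ.restrict s) :=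
  ((aemeasurable_restrict_of_measurable_subtype ht hf).mono_measure
    (Measure.restrict_mono hst le_rfl)).aestronglyMeasurable

lemma abs_sq_le_sq {a C : ℝ} (h : |a| ≤ C) : |a ^ 2| ≤ C ^ 2 := by
  rw [abs_pow]
  exact pow_le_pow_left₀ (abs_nonneg a) h 2

section Kernel

variable {E : Type*} [MeasurableSpace E]

def IsSubMarkov (Q : ℝ → Kernel E E) : Prop :=
  ∀ t : ℝ, 0 ≤ t → ∀ x, Q t x univ ≤ 1

def IsSemigroup (Q : ℝ → Kernel E E) : Prop :=
  ∀ s t : ℝ, 0 ≤ s → 0 ≤ t → ∀ f : E → ℝ, Measurable f →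
    (∃ C, ∀ x, |f x| ≤ C) → kapply (Q (s + t)) f = kapply (Q s) (kapply (Q t) f)

lemma measurable_kapply (κ : Kernel E E) [IsSFiniteKernel κ] {f : E → ℝ} (hf : Measurable f) :
    Measurable (kapply κ f) :=
  (hf.stronglyMeasurable.comp_measurable measurable_snd).integral_kernel_prod_right'.measurable

lemma isFiniteKernel_of_le_one {κ : Kernel E E} (hκ : ∀ x, κ x univ ≤ 1) : IsFiniteKernel κ :=
  ⟨⟨1, ENNReal.one_lt_top, hκ⟩⟩

lemma abs_kapply_le {κ : Kernel E E} (hκ : ∀ x, κ x univ ≤ 1) {f : E → ℝ} {C : ℝ}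
    (hC0 : 0 ≤ C) (hC : ∀ x, |f x| ≤ C) (x : E) : |kapply κ f x| ≤ C :=
  abs_integral_le_of_measure_univ_le_one (hκ x) hC0 hC

lemma kapply_le_kapply (κ : Kernel E E) [IsFiniteKernel κ] {f g : E → ℝ} (hf : Measurable f)
    (hg : Measurable g) {C : ℝ} (hfC : ∀ x, |f x| ≤ C) (hgC : ∀ x, |g x| ≤ C)
    (hfg : ∀ x, f x ≤ g x) (x : E) : kapply κ f x ≤ kapply κ g x :=
  integral_mono (.of_bound hf.aestronglyMeasurable C (ae_of_all _ hfC))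
    (.of_bound hg.aestronglyMeasurable C (ae_of_all _ hgC)) hfg

lemma tendsto_kapply (κ : Kernel E E) [IsFiniteKernel κ] {ι : Type*} {l : Filter ι}
    [l.IsCountablyGenerated] {f : ι → E → ℝ} {g : E → ℝ} {C : ℝ} (hf : ∀ n, Measurable (f n))
    (hC : ∀ᶠ n in l, ∀ y, |f n y| ≤ C) (hlim : ∀ y, Tendsto (f · y) l (𝓝 (g y))) (x : E) :
    Tendsto (fun n => kapply κ (f n) x) l (𝓝 (kapply κ g x)) :=
  tendsto_integral_of_abs_le (fun n => (hf n).aestronglyMeasurable)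
    (hC.mono fun _ h => ae_of_all _ h) (ae_of_all _ hlim)

variable {Q : ℝ → Kernel E E} {η₀ : Measure E}

lemma abs_gammaMeas_le [IsProbabilityMeasure η₀] {t : ℝ} (hQ : ∀ x, Q t x univ ≤ 1)
    {f : E → ℝ} {C : ℝ} (hC0 : 0 ≤ C) (hC : ∀ x, |f x| ≤ C) : |gammaMeas Q η₀ t f| ≤ C :=
  abs_integral_le_of_measure_univ_le_one prob_le_one hC0 (abs_kapply_le hQ hC0 hC)

lemma gammaMeas_le_gammaMeas [IsFiniteMeasure η₀] {t : ℝ} (hQ : ∀ x, Q t x univ ≤ 1)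
    {f g : E → ℝ} (hf : Measurable f) (hg : Measurable g) {C : ℝ} (hC0 : 0 ≤ C)
    (hfC : ∀ x, |f x| ≤ C) (hgC : ∀ x, |g x| ≤ C) (hfg : ∀ x, f x ≤ g x) :
    gammaMeas Q η₀ t f ≤ gammaMeas Q η₀ t g := by
  have := isFiniteKernel_of_le_one hQ
  have hint : ∀ h : E → ℝ, Measurable h → (∀ x, |h x| ≤ C) → Integrable (kapply (Q t) h) η₀ :=
    fun h hh hhC => .of_bound (measurable_kapply _ hh).aestronglyMeasurable C
      (ae_of_all _ (abs_kapply_le hQ hC0 hhC))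
  exact integral_mono (hint f hf hfC) (hint g hg hgC) (kapply_le_kapply _ hf hg hfC hgC hfg)

lemma tendsto_gammaMeas [IsFiniteMeasure η₀] {t : ℝ} (hQ : ∀ x, Q t x univ ≤ 1) {ι : Type*}
    {l : Filter ι} [l.IsCountablyGenerated] {f : ι → E → ℝ} {g : E → ℝ} {C : ℝ} (hC0 : 0 ≤ C)
    (hf : ∀ n, Measurable (f n)) (hC : ∀ᶠ n in l, ∀ y, |f n y| ≤ C)
    (hlim : ∀ y, Tendsto (f · y) l (𝓝 (g y))) :
    Tendsto (fun n => gammaMeas Q η₀ t (f n)) l (𝓝 (gammaMeas Q η₀ t g)) := by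
  have := isFiniteKernel_of_le_one hQ
  exact tendsto_integral_of_abs_le (fun n => (measurable_kapply _ (hf n)).aestronglyMeasurable)
    (hC.mono fun _ h => ae_of_all _ (abs_kapply_le hQ hC0 h))
    (ae_of_all _ (tendsto_kapply _ hf hC hlim))

lemma gammaMeas_kapply (hsemi : IsSemigroup Q) {t T : ℝ} (ht : 0 ≤ t) (htT : t ≤ T) {f : E → ℝ}
    (hf : Measurable f) (hfb : ∃ C, ∀ x, |f x| ≤ C) :
    gammaMeas Q η₀ t (kapply (Q (T - t)) f) = gammaMeas Q η₀ T f := by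
  rw [gammaMeas, gammaMeas, ← hsemi t (T - t) ht (sub_nonneg.2 htT) f hf hfb, add_sub_cancel]

lemma antitoneOn_pFun [IsFiniteMeasure η₀] (hsub : IsSubMarkov Q) (hsemi : IsSemigroup Q) :
    AntitoneOn (pFun Q η₀) (Ici 0) := by
  intro s hs t ht hst
  have hone : ∀ x : E, |(1 : ℝ)| ≤ 1 := fun _ => by simp
  have hQone : ∀ x, |kapply (Q (t - s)) (fun _ => 1) x| ≤ 1 :=
    abs_kapply_le (hsub _ (sub_nonneg.2 hst)) zero_le_one hone
  have := isFiniteKernel_of_le_one (hsub _ (sub_nonneg.2 hst))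
  rw [pFun, ← gammaMeas_kapply hsemi hs hst measurable_const ⟨1, hone⟩]
  exact gammaMeas_le_gammaMeas (hsub s hs) (measurable_kapply _ measurable_const)
    measurable_const zero_le_one hQone hone fun x => (le_abs_self _).trans (hQone x)

lemma pFun_le_of_mem_Ioc [IsFiniteMeasure η₀] (hsub : IsSubMarkov Q) (hsemi : IsSemigroup Q)
    {t T : ℝ} (ht : t ∈ Ioc 0 T) : pFun Q η₀ T ≤ pFun Q η₀ t :=
  antitoneOn_pFun hsub hsemi (mem_Ici.2 ht.1.le) (mem_Ici.2 (ht.1.le.trans ht.2)) ht.2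

lemma etaVar_kapply_mul_pFun (hsemi : IsSemigroup Q) {t T : ℝ} (ht : 0 ≤ t) (htT : t ≤ T)
    (hpt : pFun Q η₀ t ≠ 0) {g : E → ℝ} (hg : Measurable g) (hgb : ∃ C, ∀ x, |g x| ≤ C) :
    etaVar Q η₀ t (kapply (Q (T - t)) g) * pFun Q η₀ t =
      gammaMeas Q η₀ t (fun x => kapply (Q (T - t)) g x ^ 2)
        - gammaMeas Q η₀ T g ^ 2 * (pFun Q η₀ t)⁻¹ := by
  rw [etaVar, etaMeas, etaMeas, gammaMeas_kapply hsemi ht htT hg hgb]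
  field_simp

end Kernel

section AsymptoticVariance

variable {E : Type*} [MeasurableSpace E] {Q : ℝ → Kernel E E} {η₀ : Measure E}
  {T : ℝ} {μ : Measure ℝ}

lemma integrableOn_inv_pFun [IsFiniteMeasure η₀] (hsub : IsSubMarkov Q) (hsemi : IsSemigroup Q)
    (hpcont : ContinuousOn (pFun Q η₀) (Icc 0 T)) (hpT : 0 < pFun Q η₀ T)
    (hμT : μ (Ioc 0 T) < ∞) :
    IntegrableOn (fun t => (pFun Q η₀ t)⁻¹) (Ioc 0 T) μ := by
  refine .of_bound hμT (((hpcont.mono Ioc_subset_Icc_self).aemeasurable measurableSet_Ioc).inv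
    |>.aestronglyMeasurable) (pFun Q η₀ T)⁻¹ ?_
  filter_upwards [ae_restrict_mem measurableSet_Ioc] with t ht
  have hle : pFun Q η₀ T ≤ pFun Q η₀ t := pFun_le_of_mem_Ioc hsub hsemi ht
  rw [norm_inv, Real.norm_of_nonneg (hpT.trans_le hle).le]
  exact inv_anti₀ hpT hle

lemma integrableOn_gammaMeas_kapply_sq [IsProbabilityMeasure η₀]
    (hsub : IsSubMarkov Q) (hμT : μ (Ioc 0 T) < ∞) {g : E → ℝ} {C : ℝ}
    (hC0 : 0 ≤ C) (hC : ∀ x, |g x| ≤ C)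
    (hmeas : Measurable ((Icc (0 : ℝ) T).domRestrict
      fun t => gammaMeas Q η₀ t fun x => kapply (Q (T - t)) g x ^ 2)) :
    IntegrableOn (fun t => gammaMeas Q η₀ t fun x => kapply (Q (T - t)) g x ^ 2) (Ioc 0 T) μ := by
  refine .of_bound hμT (aestronglyMeasurable_of_measurable_restrict Ioc_subset_Icc_self
    measurableSet_Icc hmeas) (C ^ 2) ?_
  filter_upwards [ae_restrict_mem measurableSet_Ioc] with t ht
  exact abs_gammaMeas_le (hsub t ht.1.le) (sq_nonneg C) fun x =>
    abs_sq_le_sq (abs_kapply_le (hsub _ (sub_nonneg.2 ht.2)) hC0 hC x)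

lemma sigmaSqT_eq [IsFiniteMeasure η₀] (hsub : IsSubMarkov Q) (hsemi : IsSemigroup Q)
    (hpT : 0 < pFun Q η₀ T) (hp : IntegrableOn (fun t => (pFun Q η₀ t)⁻¹) (Ioc 0 T) μ)
    {g : E → ℝ} (hg : Measurable g) (hgb : ∃ C, ∀ x, |g x| ≤ C)
    (hF : IntegrableOn (fun t => gammaMeas Q η₀ t fun x => kapply (Q (T - t)) g x ^ 2)
      (Ioc 0 T) μ) :
    sigmaSqT Q η₀ T μ g =
      pFun Q η₀ T * gammaMeas Q η₀ T (fun x => g x ^ 2)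
        - (1 + Real.log (pFun Q η₀ T)) * gammaMeas Q η₀ T g ^ 2
        + 2 * ((∫ t in Ioc 0 T, gammaMeas Q η₀ t fun x => kapply (Q (T - t)) g x ^ 2 ∂μ)
          - gammaMeas Q η₀ T g ^ 2 * ∫ t in Ioc 0 T, (pFun Q η₀ t)⁻¹ ∂μ) := by
  have hintegrand : EqOn (fun t => etaVar Q η₀ t (kapply (Q (T - t)) g) * pFun Q η₀ t)
      (fun t => gammaMeas Q η₀ t (fun x => kapply (Q (T - t)) g x ^ 2)
        - gammaMeas Q η₀ T g ^ 2 * (pFun Q η₀ t)⁻¹) (Ioc 0 T) := fun t ht =>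
    etaVar_kapply_mul_pFun hsemi ht.1.le ht.2 (hpT.trans_le (pFun_le_of_mem_Ioc hsub hsemi ht)).ne'
      hg hgb
  rw [sigmaSqT, setIntegral_congr_fun measurableSet_Ioc hintegrand, integral_sub hF
    (hp.const_mul _), integral_const_mul, etaVar, etaMeas, etaMeas]
  field_simp
  ring

lemma tendsto_integral_gammaMeas_kapply_sq [IsProbabilityMeasure η₀] (hsub : IsSubMarkov Q)
    (hμT : μ (Ioc 0 T) < ∞) {ι : Type*} {l : Filter ι} [l.IsCountablyGenerated]
    {φn : ι → E → ℝ} {φ : E → ℝ} {C : ℝ} (hC0 : 0 ≤ C) (hφn : ∀ n, Measurable (φn n))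
    (hmeasφn : ∀ n, Measurable ((Icc (0 : ℝ) T).domRestrict
      fun t => gammaMeas Q η₀ t fun x => kapply (Q (T - t)) (φn n) x ^ 2))
    (hφnC : ∀ᶠ n in l, ∀ x, |φn n x| ≤ C) (hlim : ∀ x, Tendsto (φn · x) l (𝓝 (φ x))) :
    Tendsto (fun n => ∫ t in Ioc 0 T,
        gammaMeas Q η₀ t (fun x => kapply (Q (T - t)) (φn n) x ^ 2) ∂μ) l
      (𝓝 (∫ t in Ioc 0 T, gammaMeas Q η₀ t (fun x => kapply (Q (T - t)) φ x ^ 2) ∂μ)) := by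
  have : IsFiniteMeasure (μ.restrict (Ioc 0 T)) := isFiniteMeasure_restrict.2 hμT.ne
  refine tendsto_integral_of_abs_le (C := C ^ 2) (fun n =>
    aestronglyMeasurable_of_measurable_restrict Ioc_subset_Icc_self measurableSet_Icc
      (hmeasφn n)) ?_ ?_
  · filter_upwards [hφnC] with n hn
    filter_upwards [ae_restrict_mem measurableSet_Ioc] with t ht
    exact abs_gammaMeas_le (hsub t ht.1.le) (sq_nonneg C) fun x =>
      abs_sq_le_sq (abs_kapply_le (hsub _ (sub_nonneg.2 ht.2)) hC0 hn x)
  · filter_upwards [ae_restrict_mem measurableSet_Ioc] with t ht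
    have hQ := hsub _ (sub_nonneg.2 ht.2)
    have := isFiniteKernel_of_le_one hQ
    exact tendsto_gammaMeas (hsub t ht.1.le) (sq_nonneg C)
      (fun n => (measurable_kapply _ (hφn n)).pow_const 2)
      (hφnC.mono fun n h x => abs_sq_le_sq (abs_kapply_le hQ hC0 h x))
      fun x => (tendsto_kapply _ hφn hφnC hlim x).pow 2

theorem tendsto_sigmaSqT [IsProbabilityMeasure η₀] (hsub : IsSubMarkov Q) (hsemi : IsSemigroup Q)
    (hT : 0 ≤ T) (hpcont : ContinuousOn (pFun Q η₀) (Icc 0 T)) (hpT : 0 < pFun Q η₀ T)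
    (hμT : μ (Ioc 0 T) < ∞) {C : ℝ} (hC0 : 0 ≤ C) {φ : E → ℝ} (hφ : Measurable φ)
    (hφC : ∀ x, |φ x| ≤ C)
    (hmeasφ : Measurable ((Icc (0 : ℝ) T).domRestrict
      fun t => gammaMeas Q η₀ t fun x => kapply (Q (T - t)) φ x ^ 2))
    {ι : Type*} {l : Filter ι} [l.IsCountablyGenerated] {φn : ι → E → ℝ}
    (hφn : ∀ n, Measurable (φn n))
    (hmeasφn : ∀ n, Measurable ((Icc (0 : ℝ) T).domRestrict
      fun t => gammaMeas Q η₀ t fun x => kapply (Q (T - t)) (φn n) x ^ 2))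
    (hφnC : ∀ᶠ n in l, ∀ x, |φn n x| ≤ C) (hlim : ∀ x, Tendsto (φn · x) l (𝓝 (φ x))) :
    Tendsto (fun n => sigmaSqT Q η₀ T μ (φn n)) l (𝓝 (sigmaSqT Q η₀ T μ φ)) := by
  have hp := integrableOn_inv_pFun hsub hsemi hpcont hpT hμT
  have hfirst : Tendsto (fun n => gammaMeas Q η₀ T (φn n)) l (𝓝 (gammaMeas Q η₀ T φ)) :=
    tendsto_gammaMeas (hsub T hT) hC0 hφn hφnC hlim
  have hsecond : Tendsto (fun n => gammaMeas Q η₀ T fun x => φn n x ^ 2) l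
      (𝓝 (gammaMeas Q η₀ T fun x => φ x ^ 2)) :=
    tendsto_gammaMeas (hsub T hT) (sq_nonneg C) (fun n => (hφn n).pow_const 2)
      (hφnC.mono fun n h x => abs_sq_le_sq (h x)) fun x => (hlim x).pow 2
  have htime := tendsto_integral_gammaMeas_kapply_sq hsub hμT hC0 hφn hmeasφn hφnC hlim
  have hform : ∀ᶠ n in l, sigmaSqT Q η₀ T μ (φn n) = _ := hφnC.mono fun n h =>
    sigmaSqT_eq hsub hsemi hpT hp (hφn n) ⟨C, h⟩
      (integrableOn_gammaMeas_kapply_sq hsub hμT hC0 h (hmeasφn n))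
  rw [sigmaSqT_eq hsub hsemi hpT hp hφ ⟨C, hφC⟩
    (integrableOn_gammaMeas_kapply_sq hsub hμT hC0 hφC hmeasφ)]
  refine Tendsto.congr' (hform.mono fun n h => h.symm) ?_
  exact ((tendsto_const_nhds.mul hsecond).sub (tendsto_const_nhds.mul (hfirst.pow 2))).add
    (tendsto_const_nhds.mul (htime.sub ((hfirst.pow 2).mul tendsto_const_nhds)))

end AsymptoticVariance

theorem stmt_8_general {E : Type*} [MeasurableSpace E]
    (Q : ℝ → ProbabilityTheory.Kernel E E)
    (hsub : ∀ t : ℝ, 0 ≤ t → ∀ x, Q t x Set.univ ≤ 1)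
    (hsemi : ∀ s t : ℝ, 0 ≤ s → 0 ≤ t → ∀ f : E → ℝ, Measurable f →
        (∃ C, ∀ x, |f x| ≤ C) → kapply (Q (s + t)) f = kapply (Q s) (kapply (Q t) f))
    (η₀ : Measure E) [IsProbabilityMeasure η₀]
    (T : ℝ) (hT : 0 < T)
    (hpcont : ContinuousOn (pFun Q η₀) (Set.Icc 0 T))
    (hpT : 0 < pFun Q η₀ T)
    (μ : Measure ℝ)
    (hμ : ∀ s t : ℝ, 0 ≤ s → s ≤ t → t ≤ T →
        μ (Set.Ioc s t) = ENNReal.ofReal (pFun Q η₀ s - pFun Q η₀ t))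
    (φ : E → ℝ) (hφ : Measurable φ) (hφb : ∃ C, ∀ x, |φ x| ≤ C)
    (hmeasφ : Measurable ((Set.Icc (0 : ℝ) T).restrict
        fun t => gammaMeas Q η₀ t fun x => (kapply (Q (T - t)) φ x) ^ 2))
    (φn : ℕ → E → ℝ) (hφn : ∀ n, Measurable (φn n))
    (hmeasφn : ∀ n, Measurable ((Set.Icc (0 : ℝ) T).restrict
        fun t => gammaMeas Q η₀ t fun x => (kapply (Q (T - t)) (φn n) x) ^ 2))
    (hunif : TendstoUniformly φn φ atTop) :
    Tendsto (fun n => sigmaSqT Q η₀ T μ (φn n)) atTop (𝓝 (sigmaSqT Q η₀ T μ φ)) := by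
  obtain ⟨C, hC⟩ := hφb
  have hμT : μ (Ioc 0 T) < ∞ := by
    rw [hμ 0 T le_rfl hT.le le_rfl]
    exact ENNReal.ofReal_lt_top
  have hφC : ∀ x, |φ x| ≤ max C 0 + 1 := fun x => by linarith [hC x, le_max_left C 0]
  have hφnC : ∀ᶠ n in atTop, ∀ x, |φn n x| ≤ max C 0 + 1 := by
    filter_upwards [Metric.tendstoUniformly_iff.1 hunif 1 one_pos] with n hn x
    have := abs_sub_abs_le_abs_sub (φn n x) (φ x)
    rw [abs_sub_comm, ← Real.dist_eq] at this
    linarith [hn x, hC x, le_max_left C 0]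
  exact tendsto_sigmaSqT hsub hsemi hT.le hpcont hpT hμT (by positivity) hφ hφC hmeasφ hφn hmeasφn
    hφnC hunif.tendsto_at

/-- The asymptotic variance `σ_T²` is continuous with respect to uniform
convergence of the bounded measurable test functions. -/
theorem stmt_8 {E : Type*} [MeasurableSpace E]
    (Q : ℝ → ProbabilityTheory.Kernel E E)
    (hsub : ∀ t : ℝ, 0 ≤ t → ∀ x, Q t x Set.univ ≤ 1)
    (hid : ∀ f : E → ℝ, Measurable f → (∃ C, ∀ x, |f x| ≤ C) → kapply (Q 0) f = f)
    (hsemi : ∀ s t : ℝ, 0 ≤ s → 0 ≤ t → ∀ f : E → ℝ, Measurable f →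
        (∃ C, ∀ x, |f x| ≤ C) → kapply (Q (s + t)) f = kapply (Q s) (kapply (Q t) f))
    (η₀ : Measure E) [IsProbabilityMeasure η₀]
    (T : ℝ) (hT : 0 < T)
    (hpcont : ContinuousOn (pFun Q η₀) (Set.Icc 0 T))
    (hpT : 0 < pFun Q η₀ T)
    (μ : Measure ℝ) (hsupp : μ (Set.Ioc 0 T)ᶜ = 0)
    (hμ : ∀ s t : ℝ, 0 ≤ s → s ≤ t → t ≤ T →
        μ (Set.Ioc s t) = ENNReal.ofReal (pFun Q η₀ s - pFun Q η₀ t))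
    (φ : E → ℝ) (hφ : Measurable φ) (hφb : ∃ C, ∀ x, |φ x| ≤ C)
    (hmeasφ : Measurable ((Set.Icc (0 : ℝ) T).restrict
        fun t => gammaMeas Q η₀ t fun x => (kapply (Q (T - t)) φ x) ^ 2))
    (φn : ℕ → E → ℝ) (hφn : ∀ n, Measurable (φn n)) (hφnb : ∀ n, ∃ C, ∀ x, |φn n x| ≤ C)
    (hmeasφn : ∀ n, Measurable ((Set.Icc (0 : ℝ) T).restrict
        fun t => gammaMeas Q η₀ t fun x => (kapply (Q (T - t)) (φn n) x) ^ 2))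
    (hunif : TendstoUniformly φn φ atTop) :
    Tendsto (fun n => sigmaSqT Q η₀ T μ (φn n)) atTop (𝓝 (sigmaSqT Q η₀ T μ φ)) :=
  stmt_8_general Q hsub hsemi η₀ T hT hpcont hpT μ hμ φ hφ hφb hmeasφ φn hφn hmeasφn hunif
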